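/- arXiv:2307.10158 — 2 statements merged into one kernel-verified Lean document; each statement's English description precedes it below -/
import Mathlib

section
/- Let X ∈ ℝ^{n×p}, β ∈ ℝ^p, and let pen be a real-valued polyhedral gauge on ℝ^p (pen(b) = max{⟨u_1,b⟩,…,⟨u_k,b⟩} with u_1 = 0). Then the set V_β = {y ∈ ℝ^n : ∃λ > 0, ∃β̂ ∈ S_{X,λpen}(y) with ∂pen(β̂) = ∂pen(β)} is a convex subset of ℝ^n. -/
/-! A polyhedral gauge is sublinear, so `s ∈ ∂pen x` iff `⟪s, ·⟫ ≤ pen` with equality at `x`.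
Hence if `∂pen β₁ = ∂pen β₂ = D`, then `pen` is additive on positive combinations of `β₁, β₂`,
and each such combination again has subdifferential `D`. By first-order optimality,
`βh ∈ S_{X,λpen}(y)` iff `Xᵀ(y − Xβh) ∈ λ D`. For `y = a y₁ + b y₂` with solutions `βᵢ` at `λᵢ`,
the vector `Xᵀ(y − X(aβ₁ + bβ₂))` lies in `aλ₁ D + bλ₂ D = (aλ₁ + bλ₂) D` by convexity of `D`,
so `aβ₁ + bβ₂` is a solution at `aλ₁ + bλ₂` with the pattern of `β`. -/

open scoped RealInnerProductSpace

noncomputable section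

/-- Convert a plain coordinate vector to an element of Euclidean space. -/
def toEuc {n : ℕ} (v : Fin n → ℝ) : EuclideanSpace ℝ (Fin n) :=
  (WithLp.equiv 2 (Fin n → ℝ)).symm v

/-- The subdifferential of `φ : ℝ^p → ℝ` at `β`:
`∂φ(β) = {s : φ(β) + ⟪s, b − β⟫ ≤ φ(b) for all b}`. -/
def subdiff {p : ℕ} (φ : EuclideanSpace ℝ (Fin p) → ℝ) (β : EuclideanSpace ℝ (Fin p)) :
    Set (EuclideanSpace ℝ (Fin p)) :=
  {s | ∀ b, φ β + ⟪s, b - β⟫ ≤ φ b}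

/-- `S_{X,λpen}(y)`: the set of minimizers of `b ↦ (1/2)‖y − Xb‖₂² + λ·pen(b)`. -/
def Smin {n p : ℕ} (X : Matrix (Fin n) (Fin p) ℝ) (lam : ℝ)
    (pen : EuclideanSpace ℝ (Fin p) → ℝ) (y : EuclideanSpace ℝ (Fin n)) :
    Set (EuclideanSpace ℝ (Fin p)) :=
  {b | ∀ b' : EuclideanSpace ℝ (Fin p), (1/2) * ‖y - toEuc (X.mulVec (WithLp.ofLp b))‖^2 + lam * pen b
        ≤ (1/2) * ‖y - toEuc (X.mulVec (WithLp.ofLp b'))‖^2 + lam * pen b'}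

/-- The row space of a matrix `X`: `{Xᵀz : z ∈ ℝ^n}`. -/
def rowSpace {n p : ℕ} (X : Matrix (Fin n) (Fin p) ℝ) : Set (EuclideanSpace ℝ (Fin p)) :=
  Set.range fun z : EuclideanSpace ℝ (Fin n) => toEuc (X.transpose.mulVec (WithLp.ofLp z))

/-- The normal cone of a set `K` at `x`: `{s : ⟪s, b − x⟫ ≤ 0 for all b ∈ K}`. -/
def normalCone' {p : ℕ} (K : Set (EuclideanSpace ℝ (Fin p))) (x : EuclideanSpace ℝ (Fin p)) :
    Set (EuclideanSpace ℝ (Fin p)) :=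
  {s | ∀ b ∈ K, ⟪s, b - x⟫ ≤ 0}

/-- The supremum norm `‖x‖_∞` on Euclidean space. -/
def supNorm {p : ℕ} (x : EuclideanSpace ℝ (Fin p)) : ℝ := ⨆ i, abs (x i)

/-- `F` is an (exposed) face of `P`: `F = {x ∈ P : ⟪a,x⟫ = c}` for some valid inequality
`⟪a,x⟫ ≤ c` of `P`. -/
def IsFace {p : ℕ} (P F : Set (EuclideanSpace ℝ (Fin p))) : Prop :=
  ∃ (a : EuclideanSpace ℝ (Fin p)) (c : ℝ),
    (∀ x ∈ P, ⟪a, x⟫ ≤ c) ∧ F = {x ∈ P | ⟪a, x⟫ = c}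

open Set Filter Topology
open scoped Pointwise

theorem Finset.sup'_inner_add_le {ι E : Type*} [NormedAddCommGroup E] [InnerProductSpace ℝ E]
    (s : Finset ι) (hs : s.Nonempty) (u : ι → E) (x y : E) :
    s.sup' hs (fun i => ⟪u i, x + y⟫) ≤
      s.sup' hs (fun i => ⟪u i, x⟫) + s.sup' hs (fun i => ⟪u i, y⟫) :=
  Finset.sup'_le _ _ fun i hi => by
    rw [inner_add_right]
    exact add_le_add (Finset.le_sup' (fun i => ⟪u i, x⟫) hi)
      (Finset.le_sup' (fun i => ⟪u i, y⟫) hi)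

theorem Finset.sup'_inner_smul {ι E : Type*} [NormedAddCommGroup E] [InnerProductSpace ℝ E]
    (s : Finset ι) (hs : s.Nonempty) (u : ι → E) {c : ℝ} (hc : 0 ≤ c) (x : E) :
    s.sup' hs (fun i => ⟪u i, c • x⟫) = c * s.sup' hs (fun i => ⟪u i, x⟫) := by
  rw [Finset.apply_sup'_eq_sup'_comp _ (c * ·) fun a b => mul_max_of_nonneg a b hc]
  simp only [Function.comp_def, real_inner_smul_right]

theorem forall_half_sq_norm_sub_add_le_iff {E F : Type*} [AddCommGroup E] [Module ℝ E]
    [NormedAddCommGroup F] [InnerProductSpace ℝ F] (A : E →ₗ[ℝ] F) {f : E → ℝ}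
    (hf : ConvexOn ℝ univ f) (y : F) (x : E) :
    (∀ b, 1 / 2 * ‖y - A x‖ ^ 2 + f x ≤ 1 / 2 * ‖y - A b‖ ^ 2 + f b) ↔
      ∀ b, f x + ⟪y - A x, A (b - x)⟫ ≤ f b := by
  have expand : ∀ b,
      ‖y - A b‖ ^ 2 = ‖y - A x‖ ^ 2 - 2 * ⟪y - A x, A (b - x)⟫ + ‖A (b - x)‖ ^ 2 := fun b => by
    rw [← norm_sub_sq_real, map_sub, sub_sub_sub_cancel_right]
  constructor
  · intro hmin b
    have hstep : ∀ t : ℝ, 0 < t → t ≤ 1 →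
        f x + ⟪y - A x, A (b - x)⟫ - f b ≤ t * (‖A (b - x)‖ ^ 2 / 2) := by
      intro t ht₀ ht₁
      have hconv : f (x + t • (b - x)) ≤ (1 - t) * f x + t * f b := by
        have := hf.2 (mem_univ x) (mem_univ b) (show 0 ≤ 1 - t by linarith) ht₀.le (by ring)
        rwa [show (1 - t) • x + t • b = x + t • (b - x) by module, smul_eq_mul,
          smul_eq_mul] at this
      have h := hmin (x + t • (b - x))
      rw [expand (x + t • (b - x)), add_sub_cancel_left, map_smul, real_inner_smul_right,
        norm_smul, Real.norm_of_nonneg ht₀.le] at h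
      nlinarith
    have hlim : Tendsto (fun t : ℝ => t * (‖A (b - x)‖ ^ 2 / 2)) (𝓝[>] 0) (𝓝 0) := by
      simpa using ((continuous_mul_const _).tendsto (0 : ℝ)).mono_left nhdsWithin_le_nhds
    have hev : ∀ᶠ t in 𝓝[>] (0 : ℝ),
        f x + ⟪y - A x, A (b - x)⟫ - f b ≤ t * (‖A (b - x)‖ ^ 2 / 2) := by
      filter_upwards [Ioc_mem_nhdsGT one_pos] with t ht using hstep t ht.1 ht.2
    linarith [ge_of_tendsto hlim hev]
  · intro h b
    rw [expand b]
    nlinarith [h b, sq_nonneg ‖A (b - x)‖]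

section Subdiff

variable {p : ℕ} {pen : EuclideanSpace ℝ (Fin p) → ℝ}

theorem convex_subdiff (x : EuclideanSpace ℝ (Fin p)) : Convex ℝ (subdiff pen x) := by
  intro s hs t ht a b ha hb hab c
  have := add_le_add (mul_le_mul_of_nonneg_left (hs c) ha) (mul_le_mul_of_nonneg_left (ht c) hb)
  rw [inner_add_left, real_inner_smul_left, real_inner_smul_left]
  linear_combination this + (pen c - pen x) * hab

theorem mem_smul_subdiff_iff {lam : ℝ} (hlam : 0 < lam) {s x : EuclideanSpace ℝ (Fin p)} :
    s ∈ lam • subdiff pen x ↔ ∀ b, lam * pen x + ⟪s, b - x⟫ ≤ lam * pen b := by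
  rw [Set.mem_smul_set_iff_inv_smul_mem₀ hlam.ne']
  refine forall_congr' fun b => ?_
  rw [real_inner_smul_left, ← mul_le_mul_iff_right₀ hlam, mul_add, mul_inv_cancel_left₀ hlam.ne']

theorem convexOn_univ_of_sublinear (hadd : ∀ x y, pen (x + y) ≤ pen x + pen y)
    (hsmul : ∀ c : ℝ, 0 ≤ c → ∀ x, pen (c • x) = c * pen x) : ConvexOn ℝ univ pen :=
  ⟨convex_univ, fun x _ y _ a b ha hb _ => by
    simpa only [hsmul a ha, hsmul b hb, smul_eq_mul] using hadd (a • x) (b • y)⟩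

theorem mem_subdiff_iff_of_sublinear (hadd : ∀ x y, pen (x + y) ≤ pen x + pen y)
    (hsmul : ∀ c : ℝ, 0 ≤ c → ∀ x, pen (c • x) = c * pen x) {s x : EuclideanSpace ℝ (Fin p)} :
    s ∈ subdiff pen x ↔ (∀ b, ⟪s, b⟫ ≤ pen b) ∧ ⟪s, x⟫ = pen x := by
  constructor
  · intro hs
    have h₀ := hs 0
    have h₂ := hs ((2 : ℝ) • x)
    rw [show (0 : EuclideanSpace ℝ (Fin p)) = (0 : ℝ) • x by simp, hsmul 0 le_rfl] at h₀
    rw [hsmul 2 zero_le_two] at h₂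
    simp only [zero_smul, zero_sub, inner_neg_right, two_smul, add_sub_cancel_right] at h₀ h₂
    refine ⟨fun b => ?_, by linarith⟩
    have := hs (x + b)
    rw [add_sub_cancel_left] at this
    linarith [hadd x b]
  · rintro ⟨hle, heq⟩ b
    rw [inner_sub_right, heq]
    linarith [hle b]

theorem subdiff_smul_add_smul_of_sublinear (hadd : ∀ x y, pen (x + y) ≤ pen x + pen y)
    (hsmul : ∀ c : ℝ, 0 ≤ c → ∀ x, pen (c • x) = c * pen x) {x y : EuclideanSpace ℝ (Fin p)}
    (hne : (subdiff pen x).Nonempty) (hxy : subdiff pen x = subdiff pen y) {a b : ℝ}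
    (ha : 0 < a) (hb : 0 < b) : subdiff pen (a • x + b • y) = subdiff pen x := by
  simp only [Set.ext_iff, mem_subdiff_iff_of_sublinear hadd hsmul] at hxy ⊢
  have hlin : pen (a • x + b • y) = a * pen x + b * pen y := by
    obtain ⟨s, hs⟩ := hne
    rw [mem_subdiff_iff_of_sublinear hadd hsmul] at hs
    obtain ⟨hsx, hsy⟩ := (hxy s).1 hs
    refine le_antisymm ?_ ?_
    · simpa only [hsmul a ha.le, hsmul b hb.le] using hadd (a • x) (b • y)
    · simpa only [inner_add_right, real_inner_smul_right, hs.2, hsy] using hsx (a • x + b • y)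
  intro s
  rw [inner_add_right, real_inner_smul_right, real_inner_smul_right, hlin]
  refine and_congr_right fun hle => ⟨fun h => ?_, fun h => ?_⟩
  · nlinarith [hle x, hle y]
  · rw [h, ((hxy s).1 ⟨hle, h⟩).2]

theorem mem_Smin_iff {n : ℕ} (X : Matrix (Fin n) (Fin p) ℝ) {lam : ℝ} (hlam : 0 < lam)
    (hpen : ConvexOn ℝ univ pen)
    (y : EuclideanSpace ℝ (Fin n)) (βh : EuclideanSpace ℝ (Fin p)) :
    βh ∈ Smin X lam pen y ↔
      X.toEuclideanLin.adjoint (y - X.toEuclideanLin βh) ∈ lam • subdiff pen βh := by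
  simp only [mem_smul_subdiff_iff hlam, LinearMap.adjoint_inner_left]
  -- `toEuc (X *ᵥ ofLp b)` in `Smin` is definitionally `X.toEuclideanLin b`.
  exact forall_half_sq_norm_sub_add_le_iff X.toEuclideanLin (hpen.smul hlam.le) y βh

end Subdiff

theorem Vbeta_convex_general {n p k : ℕ}
    (X : Matrix (Fin n) (Fin p) ℝ)
    (u : Fin (k + 1) → EuclideanSpace ℝ (Fin p))
    (pen : EuclideanSpace ℝ (Fin p) → ℝ)
    (hpen : ∀ x, pen x = Finset.univ.sup' Finset.univ_nonempty fun i => ⟪u i, x⟫)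
    (β : EuclideanSpace ℝ (Fin p)) :
    Convex ℝ {y : EuclideanSpace ℝ (Fin n) | ∃ lam > 0,
        ∃ βh ∈ Smin X lam pen y, subdiff pen βh = subdiff pen β} := by
  have hadd : ∀ x y, pen (x + y) ≤ pen x + pen y := fun x y => by
    simpa only [← hpen] using Finset.univ.sup'_inner_add_le Finset.univ_nonempty u x y
  have hsmul : ∀ c : ℝ, 0 ≤ c → ∀ x, pen (c • x) = c * pen x := fun c hc x => by
    simpa only [← hpen] using Finset.univ.sup'_inner_smul Finset.univ_nonempty u hc x
  have hconv := convexOn_univ_of_sublinear hadd hsmul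
  refine convex_iff_pairwise_pos.2 ?_
  rintro y₁ ⟨l₁, hl₁, β₁, hβ₁, hD₁⟩ y₂ ⟨l₂, hl₂, β₂, hβ₂, hD₂⟩ - a b ha hb -
  have hD₂₁ : subdiff pen β₂ = subdiff pen β₁ := hD₂.trans hD₁.symm
  rw [mem_Smin_iff X hl₁ hconv] at hβ₁
  rw [mem_Smin_iff X hl₂ hconv, hD₂₁] at hβ₂
  have hD : subdiff pen (a • β₁ + b • β₂) = subdiff pen β₁ :=
    subdiff_smul_add_smul_of_sublinear hadd hsmul (Set.smul_set_nonempty.1 ⟨_, hβ₁⟩)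
      hD₂₁.symm ha hb
  refine ⟨a * l₁ + b * l₂, by positivity, a • β₁ + b • β₂, ?_, hD.trans hD₁⟩
  rw [mem_Smin_iff X (by positivity) hconv, hD,
    (convex_subdiff β₁).add_smul (by positivity) (by positivity), mul_smul, mul_smul]
  convert Set.add_mem_add (Set.smul_mem_smul_set hβ₁) (Set.smul_mem_smul_set hβ₂) using 1
  simp only [map_add, map_sub, map_smul]
  module

/-- The set `V_β` of responses `y` for which some point on the solution path
has the same pattern as `β` is convex. -/
theorem Vbeta_convex {n p k : ℕ}
    (X : Matrix (Fin n) (Fin p) ℝ)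
    (u : Fin (k + 1) → EuclideanSpace ℝ (Fin p)) (hu : u 0 = 0)
    (pen : EuclideanSpace ℝ (Fin p) → ℝ)
    (hpen : ∀ x, pen x = Finset.univ.sup' Finset.univ_nonempty fun i => ⟪u i, x⟫)
    (β : EuclideanSpace ℝ (Fin p)) :
    Convex ℝ {y : EuclideanSpace ℝ (Fin n) | ∃ lam > 0,
        ∃ βh ∈ Smin X lam pen y, subdiff pen βh = subdiff pen β} :=
  Vbeta_convex_general X u pen hpen β
end
end

section
/- Let u_1,…,u_k ∈ ℝ^p and let φ : ℝ^p → ℝ be defined by φ(x) = max{⟨u_1,x⟩,…,⟨u_k,x⟩}. If x, v ∈ ℝ^p satisfy ∂φ(x) = ∂φ(v), then for every α ∈ [0,1], ∂φ(αx + (1−α)v) = ∂φ(x) = ∂φ(v). -/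
open scoped RealInnerProductSpace

noncomputable section

/-!
A subgradient `s` common to `x` and `v` makes `φ` affine on the segment `[x, v]`: the two
supporting hyperplanes at `x` and `v` combine to a lower bound at `z = αx + (1-α)v` that matches
the convexity upper bound. Averaging the two subgradient inequalities gives
`∂φ(x) ∩ ∂φ(v) ⊆ ∂φ(z)`. Conversely, testing `s ∈ ∂φ(z)` at `v` shows, for `α > 0`, that `s`
does not undercut the affine piece from `x` to `v`, so `s` also supports `φ` at `x`. For a
maximum of finitely many linear forms `∂φ(x)` is never empty, which starts the argument.
-/

open Set

theorem convexOn_of_eq_sup'_inner {E ι : Type*} [NormedAddCommGroup E] [InnerProductSpace ℝ E]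
    {t : Finset ι} (ht : t.Nonempty) {u : ι → E} {φ : E → ℝ}
    (hφ : ∀ x, φ x = t.sup' ht fun i => ⟪u i, x⟫) : ConvexOn ℝ univ φ := by
  have hφ' : φ = t.sup' ht fun i x => ⟪u i, x⟫ := by
    ext x
    rw [hφ, Finset.sup'_apply]
  rw [hφ']
  exact Finset.sup'_induction ht _ (fun f hf g hg => hf.sup hg)
    fun i _ => (innerₗ E (u i)).convexOn convex_univ

section Subdiff

variable {p : ℕ} {φ : EuclideanSpace ℝ (Fin p) → ℝ}

theorem subdiff_nonempty_of_eq_sup'_inner {ι : Type*} {t : Finset ι} (ht : t.Nonempty)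
    {u : ι → EuclideanSpace ℝ (Fin p)} (hφ : ∀ x, φ x = t.sup' ht fun i => ⟪u i, x⟫)
    (x : EuclideanSpace ℝ (Fin p)) : (subdiff φ x).Nonempty := by
  obtain ⟨j, hj, hjx⟩ := Finset.exists_mem_eq_sup' ht fun i => ⟪u i, x⟫
  refine ⟨u j, fun b => ?_⟩
  calc φ x + ⟪u j, b - x⟫ = ⟪u j, b⟫ := by rw [hφ, hjx, inner_sub_right]; ring
    _ ≤ φ b := hφ b ▸ Finset.le_sup' (fun i => ⟪u i, b⟫) hj

variable {x v s : EuclideanSpace ℝ (Fin p)} {α : ℝ}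

theorem convex_combination_add_inner_le (hx : s ∈ subdiff φ x) (hv : s ∈ subdiff φ v)
    (hα0 : 0 ≤ α) (hα1 : α ≤ 1) (b : EuclideanSpace ℝ (Fin p)) :
    α * φ x + (1 - α) * φ v + ⟪s, b - (α • x + (1 - α) • v)⟫ ≤ φ b := by
  have hinner : ⟪s, b - (α • x + (1 - α) • v)⟫ = α * ⟪s, b - x⟫ + (1 - α) * ⟪s, b - v⟫ := by
    rw [← real_inner_smul_right, ← real_inner_smul_right, ← inner_add_right]
    congr 1
    module
  have := hx b
  have := hv b
  rw [hinner]
  nlinarith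

theorem apply_convex_combination_eq_of_mem_subdiff (hconv : ConvexOn ℝ univ φ)
    (hx : s ∈ subdiff φ x) (hv : s ∈ subdiff φ v) (hα0 : 0 ≤ α) (hα1 : α ≤ 1) :
    φ (α • x + (1 - α) • v) = α * φ x + (1 - α) * φ v := by
  refine le_antisymm (hconv.2 (mem_univ x) (mem_univ v) hα0 (by linarith) (by ring)) ?_
  simpa using convex_combination_add_inner_le hx hv hα0 hα1 (α • x + (1 - α) • v)

theorem subdiff_inter_subset_subdiff_convex_combination (hconv : ConvexOn ℝ univ φ)
    (hα0 : 0 ≤ α) (hα1 : α ≤ 1) :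
    subdiff φ x ∩ subdiff φ v ⊆ subdiff φ (α • x + (1 - α) • v) := by
  rintro s ⟨hx, hv⟩ b
  have hle : φ (α • x + (1 - α) • v) ≤ α * φ x + (1 - α) * φ v :=
    hconv.2 (mem_univ x) (mem_univ v) hα0 (by linarith) (by ring)
  linarith [convex_combination_add_inner_le hx hv hα0 hα1 b]

theorem subdiff_convex_combination_subset_of_apply_eq (hα0 : 0 < α) (hα1 : α ≤ 1)
    (hφz : φ (α • x + (1 - α) • v) = α * φ x + (1 - α) * φ v) :
    subdiff φ (α • x + (1 - α) • v) ⊆ subdiff φ x := by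
  intro s hs b
  have hzv : ⟪s, v - (α • x + (1 - α) • v)⟫ = α * ⟪s, v - x⟫ := by
    rw [← real_inner_smul_right]; congr 1; module
  have hzb : ⟪s, b - (α • x + (1 - α) • v)⟫ = ⟪s, b - x⟫ - (1 - α) * ⟪s, v - x⟫ := by
    rw [← real_inner_smul_right, ← inner_sub_right]; congr 1; module
  have hchord : ⟪s, v - x⟫ ≤ φ v - φ x := by
    have := hs v
    rw [hzv, hφz] at this
    nlinarith
  have := hs b
  rw [hzb, hφz] at this
  nlinarith

end Subdiff

/-- For `φ(x) = max{⟪u_1,x⟫,…,⟪u_k,x⟫}`, if `∂φ(x) = ∂φ(v)` then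
`∂φ(αx + (1−α)v) = ∂φ(x) = ∂φ(v)` for every `α ∈ [0,1]`. -/
theorem subdiff_convex_combination {p k : ℕ}
    (u : Fin (k + 1) → EuclideanSpace ℝ (Fin p))
    (φ : EuclideanSpace ℝ (Fin p) → ℝ)
    (hφ : ∀ x, φ x = Finset.univ.sup' Finset.univ_nonempty fun i => ⟪u i, x⟫)
    (x v : EuclideanSpace ℝ (Fin p))
    (h : subdiff φ x = subdiff φ v) :
    ∀ α : ℝ, α ∈ Set.Icc (0 : ℝ) 1 →
      subdiff φ (α • x + (1 - α) • v) = subdiff φ x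
      ∧ subdiff φ (α • x + (1 - α) • v) = subdiff φ v := by
  rintro α ⟨hα0, hα1⟩
  have hconv := convexOn_of_eq_sup'_inner _ hφ
  obtain ⟨s, hs⟩ := subdiff_nonempty_of_eq_sup'_inner _ hφ x
  have hφz := apply_convex_combination_eq_of_mem_subdiff hconv hs (h ▸ hs) hα0 hα1
  have key : subdiff φ (α • x + (1 - α) • v) = subdiff φ x := by
    refine Subset.antisymm ?_ fun s hs =>
      subdiff_inter_subset_subdiff_convex_combination hconv hα0 hα1 ⟨hs, h ▸ hs⟩
    rcases hα0.eq_or_lt with rfl | hα_pos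
    · simp [h]
    · exact subdiff_convex_combination_subset_of_apply_eq hα_pos hα1 hφz
  exact ⟨key, key.trans h⟩
end
end
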